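/- Let y > 0 and set x₁ = ȟ_y(−5π²/9), w₁ = ȟ_y(10π²/9), θ₂ = ĥ_y(5π²/27), where ȟ_y(a) = y + a/(2y) − a²/(8y³) + a³/(16y⁵) − 5a⁴/(64y⁷) and ĥ_y(a) = y + a/(2y) − a²/(8y³) + a³/(16y⁵). Then for y ≥ 1, x₁ + y + w₁ − 3θ₂ = −25(3024π⁴y⁴ − 1240π⁶y² + 2125π⁸)/(419904·y⁷) < 0. -/
import Mathlib


noncomputable def hLow (y a : ℝ) : ℝ :=
  y + a / (2 * y) - a ^ 2 / (8 * y ^ 3) + a ^ 3 / (16 * y ^ 5) - 5 * a ^ 4 / (64 * y ^ 7)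

noncomputable def hUp (y a : ℝ) : ℝ :=
  y + a / (2 * y) - a ^ 2 / (8 * y ^ 3) + a ^ 3 / (16 * y ^ 5)

theorem stmt_12 (y : ℝ) (hy : 1 ≤ y) :
    hLow y (-(5 * Real.pi ^ 2 / 9)) + y + hLow y (10 * Real.pi ^ 2 / 9)
        - 3 * hUp y (5 * Real.pi ^ 2 / 27) =
      -25 * (3024 * Real.pi ^ 4 * y ^ 4 - 1240 * Real.pi ^ 6 * y ^ 2
          + 2125 * Real.pi ^ 8) / (419904 * y ^ 7) ∧
    hLow y (-(5 * Real.pi ^ 2 / 9)) + y + hLow y (10 * Real.pi ^ 2 / 9)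
        - 3 * hUp y (5 * Real.pi ^ 2 / 27) < 0 := by
  have hy0 : (0:ℝ) < y := lt_of_lt_of_le one_pos hy
  have hyne : y ≠ 0 := ne_of_gt hy0
  have heq : hLow y (-(5 * Real.pi ^ 2 / 9)) + y + hLow y (10 * Real.pi ^ 2 / 9)
        - 3 * hUp y (5 * Real.pi ^ 2 / 27) =
      -25 * (3024 * Real.pi ^ 4 * y ^ 4 - 1240 * Real.pi ^ 6 * y ^ 2
          + 2125 * Real.pi ^ 8) / (419904 * y ^ 7) := by
    unfold hLow hUp
    field_simp
    ring
  refine ⟨heq, ?_⟩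
  rw [heq]
  have hpi : (0:ℝ) < Real.pi := Real.pi_pos
  have hnum : 0 < 3024 * Real.pi ^ 4 * y ^ 4 - 1240 * Real.pi ^ 6 * y ^ 2
      + 2125 * Real.pi ^ 8 := by
    nlinarith [sq_nonneg (3024 * Real.pi ^ 2 * y ^ 2 - 620 * Real.pi ^ 4), sq_nonneg y,
      pow_pos hpi 4, pow_pos hpi 8, sq_nonneg (Real.pi ^ 2 * y)]
  have hden : 0 < 419904 * y ^ 7 := by positivity
  have : -25 * (3024 * Real.pi ^ 4 * y ^ 4 - 1240 * Real.pi ^ 6 * y ^ 2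
      + 2125 * Real.pi ^ 8) < 0 := by nlinarith
  exact div_neg_of_neg_of_pos this hden
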